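/- Let g ∈ ℝ and let u : S → [0,∞] satisfy, for every i ∈ S with i ≠ z, the supersolution inequality u(i) ≥ Q(i,g)·( q(z|i) + Σ_{j ∈ S∖{i,z}} u(j)·q(j|i) ) in [0,∞] (convention 0·∞ = 0), where Q(i,g) := ∫₀^∞ exp( (λ(c(i) − g) + q(i|i))·s ) ds ∈ (0,∞]. Then u(i) ≥ E_i[ W_g · 1_{{N < ∞}} ] for every i ∈ S with i ≠ z. (Verification inequality (3-8)/(s) in the proof of Theorem 3.1(d): supersolutions of the first-passage equations dominate the first-passage exponential value.) -/

import Mathlib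

/-!
Kill the chain on reaching `z`: a sojourn `(x, θ)` gets weight `η(x, θ) = exp(λ (c x - g) θ)` if
`x ≠ z` and `0` if `x = z`. As `X₀ = i ≠ z` almost surely,
`W_g 1_{N<∞} = ∑ₙ (∏_{m<n} η(X_m, θ_{m+1})) 1_{X_n = z}`.

Extend `u` by `u z = 1` and let `V x` be the mean of this extension at the state after `x`. The
supersolution inequality says exactly that `E_x[1_{X₀=z} + η(X₀, θ₁) V(X₀)] ≤ u x` for every `x`:
at `z` both sides are `1`, and off `z` the left side is `Q(x,g) (q(z|x) + ∑_j u j q(j|x))`, because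
`E[exp(λ (c x - g) θ)] = -q(x|x) Q(x,g)` for the `Exp(-q(x|x))` holding time `θ`. By the Markov
property, the mass killed up to step `n` plus `E_i[∏_{m≤n} η(X_m, θ_{m+1}) V(X_n)]` is then
nonincreasing in `n`, so the total killed mass is at most its initial value, which is `≤ u i`.
-/

open MeasureTheory Filter Set
open scoped ENNReal

noncomputable section

namespace RiskCTMDP10

variable {S : Type*} [Fintype S] [DecidableEq S] [MeasurableSpace S]
  [MeasurableSingletonClass S]

/-- Exponential distribution with rate `r`, as a measure on `ℝ` supported on `(0,∞)`. -/
def expM (r : ℝ) : Measure ℝ :=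
  (volume.restrict (Ioi (0 : ℝ))).withDensity fun t => ENNReal.ofReal (r * Real.exp (-(r * t)))

/-- Law of a coordinate `(X_m, θ_{m+1})` of the jump chain when `X_m = j` is deterministic:
the state is `j` and the holding time is exponential with rate `−q(j|j)`. -/
def initM (q : S → S → ℝ) (j : S) : Measure (S × ℝ) :=
  (expM (-(q j j))).map fun t => (j, t)

/-- One-step transition law of the jump chain out of state `x`: jump to `j ≠ x` with
probability `−q(j|x)/q(x|x)`, then hold an independent `Exp(−q(j|j))` time. -/
def stepM (q : S → S → ℝ) (x : S) : Measure (S × ℝ) :=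
  ∑ j ∈ Finset.univ.erase x, ENNReal.ofReal (q j x / -(q x x)) • initM q j

/-- `P` is the family of laws (as given by the Ionescu–Tulcea construction) of the jump chain
`((X_m)_{m≥0}, (θ_m)_{m≥1})` with transition rates `q`, coordinate `m` being `(X_m, θ_{m+1})`:
each `P i` is a probability measure, the zeroth coordinate has law `initM q i`, and the
(one-step) Markov property with transition kernel `stepM q` holds. -/
def IsJumpChainLaw (q : S → S → ℝ) (P : S → Measure (ℕ → S × ℝ)) : Prop :=
  (∀ i, IsProbabilityMeasure (P i)) ∧
  (∀ i, (P i).map (fun ω => ω 0) = initM q i) ∧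
  (∀ (i : S) (m : ℕ) (φ : (ℕ → S × ℝ) → ℝ≥0∞) (ψ : S × ℝ → ℝ≥0∞),
    Measurable φ → Measurable ψ →
    (∀ ω ω' : ℕ → S × ℝ, (∀ k ≤ m, ω k = ω' k) → φ ω = φ ω') →
    ∫⁻ ω, φ ω * ψ (ω (m + 1)) ∂(P i) =
      ∫⁻ ω, φ ω * ∫⁻ y, ψ y ∂(stepM q (ω m).1) ∂(P i))

open Classical in
/-- The first-passage exponential functional
`W_g = exp(λ Σ_{m=0}^{N−1} (c(X_m) − g) θ_{m+1})` on `{N < ∞}` (where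
`N = inf{m ≥ 1 : X_m = z}`), and the corresponding `limsup` on `{N = ∞}`, valued in `[0,∞]`. -/
def W (z : S) (lam : ℝ) (c : S → ℝ) (g : ℝ) (ω : ℕ → S × ℝ) : ℝ≥0∞ :=
  if h : ∃ m, 1 ≤ m ∧ (ω m).1 = z then
    ENNReal.ofReal (Real.exp (lam *
      ∑ m ∈ Finset.range (Nat.find h), (c (ω m).1 - g) * (ω m).2))
  else
    limsup (fun n => ENNReal.ofReal (Real.exp (lam *
      ∑ m ∈ Finset.range n, (c (ω m).1 - g) * (ω m).2))) atTop

/-- `Q(i,g) = ∫₀^∞ exp((λ(c(i) − g) + q(i|i)) s) ds ∈ (0,∞]`. -/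
def Qint (lam : ℝ) (c : S → ℝ) (q : S → S → ℝ) (i : S) (g : ℝ) : ℝ≥0∞ :=
  ∫⁻ s in Ioi (0 : ℝ), ENNReal.ofReal (Real.exp ((lam * (c i - g) + q i i) * s))

section MarkovStep

variable {α : Type*} [MeasurableSpace α]

def HasMarkovStep (μ : Measure (ℕ → α)) (K : α → Measure α) : Prop :=
  ∀ (m : ℕ) (φ : (ℕ → α) → ℝ≥0∞) (ψ : α → ℝ≥0∞), Measurable φ → Measurable ψ →
    (∀ ω ω' : ℕ → α, (∀ k ≤ m, ω k = ω' k) → φ ω = φ ω') →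
    ∫⁻ ω, φ ω * ψ (ω (m + 1)) ∂μ = ∫⁻ ω, φ ω * ∫⁻ y, ψ y ∂(K (ω m)) ∂μ

variable {μ : Measure (ℕ → α)} {K : α → Measure α} {η χ v : α → ℝ≥0∞}

namespace HasMarkovStep

variable (hμ : HasMarkovStep μ K) (hη : Measurable η) (hχ : Measurable χ) (hv : Measurable v)
  (hsuper : ∀ y, ∫⁻ y', χ y' + η y' * v y' ∂(K y) ≤ v y)
include hμ hη hχ hv hsuper

lemma lintegral_add_lintegral_succ_le (n : ℕ) :
    ∫⁻ ω, (∏ m ∈ Finset.range (n + 1), η (ω m)) * χ (ω (n + 1)) ∂μ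
      + ∫⁻ ω, (∏ m ∈ Finset.range (n + 1 + 1), η (ω m)) * v (ω (n + 1)) ∂μ
      ≤ ∫⁻ ω, (∏ m ∈ Finset.range (n + 1), η (ω m)) * v (ω n) ∂μ := by
  have hdep : ∀ ω ω' : ℕ → α, (∀ k ≤ n, ω k = ω' k) →
      ∏ m ∈ Finset.range (n + 1), η (ω m) = ∏ m ∈ Finset.range (n + 1), η (ω' m) :=
    fun ω ω' h => Finset.prod_congr rfl fun m hm =>
      by rw [h m (Nat.lt_succ_iff.mp (Finset.mem_range.1 hm))]
  calc _ = ∫⁻ ω, (∏ m ∈ Finset.range (n + 1), η (ω m))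
          * (χ (ω (n + 1)) + η (ω (n + 1)) * v (ω (n + 1))) ∂μ := by
        rw [← lintegral_add_left (by fun_prop)]
        refine lintegral_congr fun ω => ?_
        rw [Finset.prod_range_succ _ (n + 1)]
        ring
    _ = ∫⁻ ω, (∏ m ∈ Finset.range (n + 1), η (ω m))
          * ∫⁻ y, χ y + η y * v y ∂(K (ω n)) ∂μ :=
        hμ n _ (fun y => χ y + η y * v y) (by fun_prop) (by fun_prop) hdep
    _ ≤ _ := lintegral_mono fun ω => mul_le_mul_right (hsuper _) _

lemma sum_add_lintegral_le (M : ℕ) :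
    ∑ n ∈ Finset.range (M + 1), ∫⁻ ω, (∏ m ∈ Finset.range n, η (ω m)) * χ (ω n) ∂μ
      + ∫⁻ ω, (∏ m ∈ Finset.range (M + 1), η (ω m)) * v (ω M) ∂μ
      ≤ ∫⁻ ω, χ (ω 0) + η (ω 0) * v (ω 0) ∂μ := by
  induction M with
  | zero =>
    rw [lintegral_add_left (by fun_prop)]
    simp
  | succ M ih =>
    rw [Finset.sum_range_succ, add_assoc]
    exact (add_le_add_right (hμ.lintegral_add_lintegral_succ_le hη hχ hv hsuper M) _).trans ih

theorem lintegral_tsum_killed_le :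
    ∫⁻ ω, ∑' n, (∏ m ∈ Finset.range n, η (ω m)) * χ (ω n) ∂μ
      ≤ ∫⁻ ω, χ (ω 0) + η (ω 0) * v (ω 0) ∂μ := by
  rw [lintegral_tsum fun n => by fun_prop, ENNReal.tsum_eq_iSup_nat]
  refine iSup_le fun M => ?_
  calc _ ≤ ∑ n ∈ Finset.range (M + 1), ∫⁻ ω, (∏ m ∈ Finset.range n, η (ω m)) * χ (ω n) ∂μ :=
        Finset.sum_le_sum_of_subset (Finset.range_subset_range.2 M.le_succ)
    _ ≤ _ := le_self_add.trans (hμ.sum_add_lintegral_le hη hχ hv hsuper M)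

end HasMarkovStep

end MarkovStep

section JumpChain

variable {S : Type*}

lemma lintegral_expM_exp {r : ℝ} (hr : 0 < r) (a : ℝ) :
    ∫⁻ t, ENNReal.ofReal (Real.exp (a * t)) ∂(expM r)
      = ENNReal.ofReal r * ∫⁻ t in Ioi (0 : ℝ), ENNReal.ofReal (Real.exp ((a - r) * t)) := by
  rw [expM, lintegral_withDensity_eq_lintegral_mul _ (by fun_prop) (by fun_prop),
    ← lintegral_const_mul _ (by fun_prop)]
  refine lintegral_congr fun t => ?_
  rw [Pi.mul_apply, ← ENNReal.ofReal_mul hr.le, ← ENNReal.ofReal_mul (by positivity), mul_assoc,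
    ← Real.exp_add]
  ring_nf

lemma isProbabilityMeasure_expM {r : ℝ} (hr : 0 < r) : IsProbabilityMeasure (expM r) := by
  constructor
  have h := lintegral_expM_exp hr 0
  simp only [zero_mul, Real.exp_zero, ENNReal.ofReal_one, lintegral_const, one_mul,
    zero_sub] at h
  rw [h, ← ofReal_integral_eq_lintegral_ofReal (integrableOn_exp_mul_Ioi (by linarith) 0)
    (ae_of_all _ fun _ => (Real.exp_pos _).le), integral_exp_mul_Ioi (by linarith),
    ← ENNReal.ofReal_mul hr.le]
  field_simp
  simp

lemma lintegral_initM [MeasurableSpace S] (q : S → S → ℝ) (j : S) {f : S × ℝ → ℝ≥0∞}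
    (hf : Measurable f) :
    ∫⁻ y, f y ∂(initM q j) = ∫⁻ t, f (j, t) ∂(expM (-(q j j))) :=
  lintegral_map hf (measurable_const.prodMk measurable_id)

lemma lintegral_initM_comp_fst [MeasurableSpace S] [MeasurableSingletonClass S] [Countable S]
    {q : S → S → ℝ} {j : S} (hq : q j j < 0) (f : S → ℝ≥0∞) :
    ∫⁻ y, f y.1 ∂(initM q j) = f j := by
  have := isProbabilityMeasure_expM (neg_pos.2 hq)
  rw [lintegral_initM q j (f := fun y => f y.1) (Measurable.of_discrete.comp measurable_fst)]
  simp

lemma lintegral_stepM [Fintype S] [DecidableEq S] [MeasurableSpace S] (q : S → S → ℝ) (x : S)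
    (f : S × ℝ → ℝ≥0∞) :
    ∫⁻ y, f y ∂(stepM q x)
      = ∑ j ∈ Finset.univ.erase x,
          ENNReal.ofReal (q j x / -(q x x)) * ∫⁻ y, f y ∂(initM q j) := by
  simp only [stepM, lintegral_finsetSum_measure, lintegral_smul_measure, smul_eq_mul]

lemma lintegral_stepM_mono [Fintype S] [DecidableEq S] [MeasurableSpace S] {q : S → S → ℝ}
    {f f' : S × ℝ → ℝ≥0∞} (h : ∀ j, ∫⁻ y, f y ∂(initM q j) ≤ ∫⁻ y, f' y ∂(initM q j))
    (x : S) :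
    ∫⁻ y, f y ∂(stepM q x) ≤ ∫⁻ y, f' y ∂(stepM q x) := by
  rw [lintegral_stepM, lintegral_stepM]
  exact Finset.sum_le_sum fun j _ => mul_le_mul_right (h j) _

def stepMean [Fintype S] [DecidableEq S] [MeasurableSpace S] (q : S → S → ℝ) (f : S → ℝ≥0∞)
    (x : S) : ℝ≥0∞ :=
  ∫⁻ y, f y.1 ∂(stepM q x)

@[fun_prop]
lemma measurable_stepMean_comp_fst [Fintype S] [DecidableEq S] [MeasurableSpace S]
    [MeasurableSingletonClass S] (q : S → S → ℝ) (f : S → ℝ≥0∞) :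
    Measurable fun y : S × ℝ => stepMean q f y.1 :=
  (Measurable.of_discrete (f := stepMean q f)).comp measurable_fst

lemma ofReal_mul_stepMean [Fintype S] [DecidableEq S] [MeasurableSpace S]
    [MeasurableSingletonClass S] {q : S → S → ℝ} (hq : ∀ i, q i i < 0) (f : S → ℝ≥0∞) (x : S) :
    ENNReal.ofReal (-(q x x)) * stepMean q f x
      = ∑ j ∈ Finset.univ.erase x, ENNReal.ofReal (q j x) * f j := by
  rw [stepMean, lintegral_stepM, Finset.mul_sum]
  refine Finset.sum_congr rfl fun j _ => ?_
  rw [lintegral_initM_comp_fst (hq j), ← mul_assoc, ← ENNReal.ofReal_mul (neg_pos.2 (hq x)).le,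
    mul_div_cancel₀ _ (neg_pos.2 (hq x)).ne']

lemma measurableSet_fst_eq [MeasurableSpace S] [MeasurableSingletonClass S] {β : Type*}
    [MeasurableSpace β] (z : S) : MeasurableSet {y : S × β | y.1 = z} :=
  measurable_fst (measurableSet_singleton z)

variable [DecidableEq S] {z : S} {lam : ℝ} {c : S → ℝ} {g : ℝ}

def killedWeight (z : S) (lam : ℝ) (c : S → ℝ) (g : ℝ) (y : S × ℝ) : ℝ≥0∞ :=
  if y.1 = z then 0 else ENNReal.ofReal (Real.exp (lam * ((c y.1 - g) * y.2)))

def hitIndicator (z : S) (y : S × ℝ) : ℝ≥0∞ :=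
  if y.1 = z then 1 else 0

@[fun_prop]
lemma measurable_killedWeight [MeasurableSpace S] [MeasurableSingletonClass S] [Countable S] :
    Measurable (killedWeight z lam c g) :=
  Measurable.ite (measurableSet_fst_eq z) measurable_const
    (by have : Measurable c := .of_discrete; fun_prop)

@[fun_prop]
lemma measurable_hitIndicator [MeasurableSpace S] [MeasurableSingletonClass S] :
    Measurable (hitIndicator z) :=
  Measurable.ite (measurableSet_fst_eq z) measurable_const measurable_const

lemma lintegral_killedWeight_expM {q : S → S → ℝ} {j : S} (hq : q j j < 0) (hj : j ≠ z) :
    ∫⁻ t, killedWeight z lam c g (j, t) ∂(expM (-(q j j)))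
      = ENNReal.ofReal (-(q j j)) * Qint lam c q j g := by
  simp only [killedWeight, if_neg hj, ← mul_assoc]
  rw [lintegral_expM_exp (neg_pos.2 hq), Qint]
  simp only [sub_neg_eq_add]

lemma prod_killedWeight_of_forall_ne {ω : ℕ → S × ℝ} {n : ℕ} (h : ∀ m < n, (ω m).1 ≠ z) :
    ∏ m ∈ Finset.range n, killedWeight z lam c g (ω m)
      = ENNReal.ofReal (Real.exp (lam * ∑ m ∈ Finset.range n, (c (ω m).1 - g) * (ω m).2)) := by
  rw [Finset.mul_sum, Real.exp_sum,
    ENNReal.ofReal_prod_of_nonneg fun _ _ => (Real.exp_pos _).le]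
  exact Finset.prod_congr rfl fun m hm => if_neg (h m (Finset.mem_range.1 hm))

lemma indicator_W_eq_tsum [Fintype S] [MeasurableSpace S] [MeasurableSingletonClass S]
    {ω : ℕ → S × ℝ} (h0 : (ω 0).1 ≠ z) :
    {ω' : ℕ → S × ℝ | ∃ m, 1 ≤ m ∧ (ω' m).1 = z}.indicator (W z lam c g) ω
      = ∑' n, (∏ m ∈ Finset.range n, killedWeight z lam c g (ω m)) * hitIndicator z (ω n) := by
  by_cases h : ∃ m, 1 ≤ m ∧ (ω m).1 = z
  · have hne : ∀ m < Nat.find h, (ω m).1 ≠ z := fun m hm hmz =>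
      Nat.find_min h hm ⟨Nat.one_le_iff_ne_zero.2 (by rintro rfl; exact h0 hmz), hmz⟩
    rw [indicator_of_mem (by exact h), W, dif_pos h, tsum_eq_single (Nat.find h)]
    · rw [prod_killedWeight_of_forall_ne hne, hitIndicator, if_pos (Nat.find_spec h).2, mul_one]
    · intro n hn
      rcases lt_or_gt_of_ne hn with hlt | hgt
      · simp [hitIndicator, hne n hlt]
      · have hkill : killedWeight z lam c g (ω (Nat.find h)) = 0 := if_pos (Nat.find_spec h).2
        rw [Finset.prod_eq_zero (Finset.mem_range.2 hgt) hkill, zero_mul]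
  · have hne : ∀ n, (ω n).1 ≠ z := fun n hn =>
      h ⟨n, Nat.one_le_iff_ne_zero.2 (by rintro rfl; exact h0 hn), hn⟩
    rw [indicator_of_notMem (by exact h)]
    simp [hitIndicator, hne]

def IsFirstPassageSupersolution [Fintype S] (z : S) (lam : ℝ) (c : S → ℝ) (q : S → S → ℝ) (g : ℝ)
    (u : S → ℝ≥0∞) : Prop :=
  ∀ i : S, i ≠ z →
    Qint lam c q i g *
        (ENNReal.ofReal (q z i) +
          ∑ j ∈ (Finset.univ.erase i).erase z, u j * ENNReal.ofReal (q j i)) ≤ u i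

lemma lintegral_initM_le_update [Fintype S] [MeasurableSpace S] [MeasurableSingletonClass S]
    {q : S → S → ℝ} (hq : ∀ i, q i i < 0) {u : S → ℝ≥0∞}
    (hsuper : IsFirstPassageSupersolution z lam c q g u)
    (j : S) :
    ∫⁻ y, hitIndicator z y + killedWeight z lam c g y * stepMean q (Function.update u z 1) y.1
        ∂(initM q j)
      ≤ Function.update u z 1 j := by
  rw [lintegral_initM q j (by fun_prop)]
  by_cases hj : j = z
  · subst hj
    have := isProbabilityMeasure_expM (neg_pos.2 (hq j))
    simp [hitIndicator, killedWeight]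
  · simp only [hitIndicator, if_neg hj, zero_add, Function.update_of_ne hj]
    rw [lintegral_mul_const _ (by fun_prop), lintegral_killedWeight_expM (hq j) hj,
      mul_comm _ (Qint _ _ _ _ _), mul_assoc, ofReal_mul_stepMean hq,
      ← Finset.add_sum_erase _ _ (Finset.mem_erase.2 ⟨Ne.symm hj, Finset.mem_univ z⟩),
      Function.update_self, mul_one]
    convert hsuper j hj using 3
    exact Finset.sum_congr rfl fun k hk => by
      rw [Function.update_of_ne (Finset.ne_of_mem_erase hk), mul_comm]

lemma lintegral_stepM_le_stepMean [Fintype S] [MeasurableSpace S] [MeasurableSingletonClass S]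
    {q : S → S → ℝ} (hq : ∀ i, q i i < 0) {u : S → ℝ≥0∞}
    (hsuper : IsFirstPassageSupersolution z lam c q g u)
    (x : S) :
    ∫⁻ y, hitIndicator z y + killedWeight z lam c g y * stepMean q (Function.update u z 1) y.1
        ∂(stepM q x)
      ≤ stepMean q (Function.update u z 1) x :=
  lintegral_stepM_mono (fun j => (lintegral_initM_le_update hq hsuper j).trans_eq
    (lintegral_initM_comp_fst (hq j) _).symm) x

end JumpChain

namespace IsJumpChainLaw

variable {S : Type*} [Fintype S] [DecidableEq S] [MeasurableSpace S]
  {q : S → S → ℝ} {P : S → Measure (ℕ → S × ℝ)}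

lemma hasMarkovStep (hP : IsJumpChainLaw q P) (i : S) :
    HasMarkovStep (P i) (fun y => stepM q y.1) :=
  hP.2.2 i

lemma lintegral_comp_zero (hP : IsJumpChainLaw q P) (i : S) {f : S × ℝ → ℝ≥0∞}
    (hf : Measurable f) : ∫⁻ ω, f (ω 0) ∂(P i) = ∫⁻ y, f y ∂(initM q i) := by
  rw [← hP.2.1 i, lintegral_map hf (measurable_pi_apply 0)]

variable [MeasurableSingletonClass S]

lemma ae_fst_zero_eq (hP : IsJumpChainLaw q P) (i : S) : ∀ᵐ ω ∂(P i), (ω 0).1 = i := by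
  have hinit : ∀ᵐ y ∂(initM q i), y.1 = i :=
    (ae_map_iff (measurable_const.prodMk measurable_id).aemeasurable
      (measurableSet_fst_eq i)).2 (ae_of_all _ fun _ => rfl)
  rw [← hP.2.1 i] at hinit
  exact ae_of_ae_map (measurable_pi_apply 0).aemeasurable hinit

lemma lintegral_tsum_killed_le_update (hP : IsJumpChainLaw q P) (hq : ∀ i, q i i < 0)
    {z : S} {lam : ℝ} {c : S → ℝ} {g : ℝ} {u : S → ℝ≥0∞}
    (hsuper : IsFirstPassageSupersolution z lam c q g u)
    (i : S) :
    ∫⁻ ω, ∑' n, (∏ m ∈ Finset.range n, killedWeight z lam c g (ω m)) * hitIndicator z (ω n)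
        ∂(P i)
      ≤ Function.update u z 1 i := by
  set V := stepMean q (Function.update u z 1)
  have hV : Measurable fun y : S × ℝ => V y.1 := measurable_stepMean_comp_fst q _
  calc _ ≤ ∫⁻ ω, hitIndicator z (ω 0) + killedWeight z lam c g (ω 0) * V (ω 0).1 ∂(P i) :=
        (hP.hasMarkovStep i).lintegral_tsum_killed_le (by fun_prop) (by fun_prop) hV
          fun y => lintegral_stepM_le_stepMean hq hsuper y.1
    _ = ∫⁻ y, hitIndicator z y + killedWeight z lam c g y * V y.1 ∂(initM q i) :=
        hP.lintegral_comp_zero i (f := fun y => hitIndicator z y + killedWeight z lam c g y * V y.1)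
          (by fun_prop)
    _ ≤ _ := lintegral_initM_le_update hq hsuper i

end IsJumpChainLaw

theorem stmt10_general {S : Type*} [Fintype S] [DecidableEq S] [MeasurableSpace S]
    [MeasurableSingletonClass S]
    (z : S) (lam : ℝ) (q : S → S → ℝ) (c : S → ℝ)
    (hq_diag : ∀ i : S, q i i < 0)
    (P : S → Measure (ℕ → S × ℝ)) (hP : IsJumpChainLaw q P)
    (g : ℝ) (u : S → ℝ≥0∞)
    (hsuper : ∀ i : S, i ≠ z →
      Qint lam c q i g *
          (ENNReal.ofReal (q z i) +
            ∑ j ∈ (Finset.univ.erase i).erase z, u j * ENNReal.ofReal (q j i)) ≤ u i) :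
    ∀ i : S, i ≠ z →
      (∫⁻ ω, {ω' : ℕ → S × ℝ | ∃ m, 1 ≤ m ∧ (ω' m).1 = z}.indicator (W z lam c g) ω ∂(P i))
        ≤ u i := by
  intro i hi
  calc _ = ∫⁻ ω, ∑' n, (∏ m ∈ Finset.range n, killedWeight z lam c g (ω m))
          * hitIndicator z (ω n) ∂(P i) :=
        lintegral_congr_ae <| (hP.ae_fst_zero_eq i).mono fun ω hω => indicator_W_eq_tsum (hω ▸ hi)
    _ ≤ Function.update u z 1 i := hP.lintegral_tsum_killed_le_update hq_diag hsuper i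
    _ = u i := Function.update_of_ne hi _ _

/-- **Verification inequality (3-8)/(s)** in the proof of Theorem 3.1(d): if `u : S → [0,∞]`
is a supersolution of the first-passage equations, i.e. for every `i ≠ z`,
`u(i) ≥ Q(i,g)(q(z|i) + Σ_{j∉{i,z}} u(j) q(j|i))` in `[0,∞]` (convention `0·∞ = 0`),
then `u(i) ≥ E_i[W_g · 1_{{N < ∞}}]` for every `i ≠ z`. -/
theorem stmt10 {S : Type*} [Fintype S] [DecidableEq S] [Nonempty S] [MeasurableSpace S]
    [MeasurableSingletonClass S]
    (z : S) (lam : ℝ) (hlam : 0 < lam) (q : S → S → ℝ) (c : S → ℝ)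
    (hq_nonneg : ∀ i j : S, j ≠ i → 0 ≤ q j i)
    (hq_sum : ∀ i : S, ∑ j, q j i = 0)
    (hq_diag : ∀ i : S, q i i < 0)
    (P : S → Measure (ℕ → S × ℝ)) (hP : IsJumpChainLaw q P)
    (g : ℝ) (u : S → ℝ≥0∞)
    (hsuper : ∀ i : S, i ≠ z →
      Qint lam c q i g *
          (ENNReal.ofReal (q z i) +
            ∑ j ∈ (Finset.univ.erase i).erase z, u j * ENNReal.ofReal (q j i)) ≤ u i) :
    ∀ i : S, i ≠ z →
      (∫⁻ ω, {ω' : ℕ → S × ℝ | ∃ m, 1 ≤ m ∧ (ω' m).1 = z}.indicator (W z lam c g) ω ∂(P i))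
        ≤ u i :=
  stmt10_general z lam q c hq_diag P hP g u hsuper
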